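/- arXiv:2604.25227 — 8 statements merged into one kernel-verified Lean document; each statement's English description precedes it below -/
import Mathlib

section
/- Let V be a free ℤ-module of finite rank at most 22, equipped with a symmetric bilinear form B : V × V → ℤ such that B(x,x) is even for every x ∈ V, and suppose there exists a vector h ∈ V with B(h,h) > 0. Let n ≥ 1 and let C, C' : Fin n → V be an A₂^n configuration in (V,B), and suppose there exists M ∈ V with 3 • M = Σ_{i} (C i + 2 • C' i). Then n = 3, n = 6 or n = 9. -/
/-- Lemma 2.2 of the paper: if an `A₂^n` configuration of `(-2)`-classes in an even
lattice of rank at most 22 containing a class of positive square is 3-divisible,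
then `n = 3`, `n = 6` or `n = 9`. -/
theorem stmt0 (V : Type*) [AddCommGroup V] [Module ℤ V]
    [Module.Free ℤ V] [Module.Finite ℤ V]
    (hrank : Module.finrank ℤ V ≤ 22)
    (B : V →ₗ[ℤ] V →ₗ[ℤ] ℤ)
    (hsymm : ∀ x y, B x y = B y x)
    (heven : ∀ x, Even (B x x))
    (h : V) (hh : 0 < B h h)
    (n : ℕ) (hn : 1 ≤ n)
    (C C' : Fin n → V)
    (hCC : ∀ i, B (C i) (C i) = -2)
    (hC'C' : ∀ i, B (C' i) (C' i) = -2)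
    (hCC' : ∀ i, B (C i) (C' i) = 1)
    (hCij : ∀ i j, i ≠ j → B (C i) (C j) = 0)
    (hC'ij : ∀ i j, i ≠ j → B (C' i) (C' j) = 0)
    (hCC'ij : ∀ i j, i ≠ j → B (C i) (C' j) = 0)
    (M : V) (hM : 3 • M = ∑ i, (C i + 2 • C' i)) :
    n = 3 ∨ n = 6 ∨ n = 9 := by
  -- Step 1: the 2n classes are linearly independent, so 2n ≤ 22, i.e. n ≤ 11.
  have hli : LinearIndependent ℤ (Sum.elim C C') := by
    rw [Fintype.linearIndependent_iff]
    intro g hg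
    have key : ∀ w : V, ∑ k : Fin n ⊕ Fin n, g k * B (Sum.elim C C' k) w = 0 := by
      intro w
      have h0 := congrArg (fun x => B x w) hg
      simpa [map_sum, LinearMap.sum_apply, smul_eq_mul] using h0
    have hval : ∀ i : Fin n,
        g (Sum.inl i) * (-2) + g (Sum.inr i) * 1 = 0 ∧
        g (Sum.inl i) * 1 + g (Sum.inr i) * (-2) = 0 := by
      intro i
      constructor
      · have h1 := key (C i)
        rw [Fintype.sum_sum_type] at h1
        simp only [Sum.elim_inl, Sum.elim_inr] at h1
        rw [Finset.sum_eq_single i (fun j _ hj => by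
              simp [hCij j i hj]) (by simp)] at h1
        rw [Finset.sum_eq_single i (fun j _ hj => by
              have : B (C' j) (C i) = 0 := by rw [hsymm]; exact hCC'ij i j (Ne.symm hj)
              simp [this]) (by simp)] at h1
        have hb : B (C' i) (C i) = 1 := by rw [hsymm]; exact hCC' i
        rw [hCC i, hb] at h1
        simpa using h1
      · have h2 := key (C' i)
        rw [Fintype.sum_sum_type] at h2
        simp only [Sum.elim_inl, Sum.elim_inr] at h2
        rw [Finset.sum_eq_single i (fun j _ hj => by
              simp [hCC'ij j i hj]) (by simp)] at h2
        rw [Finset.sum_eq_single i (fun j _ hj => by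
              simp [hC'ij j i hj]) (by simp)] at h2
        rw [hCC' i, hC'C' i] at h2
        simpa using h2
    intro k
    rcases k with i | i
    · obtain ⟨e1, e2⟩ := hval i; omega
    · obtain ⟨e1, e2⟩ := hval i; omega
  have hcard : 2 * n ≤ 22 := by
    have := hli.fintype_card_le_finrank
    simp [Fintype.card_sum] at this
    omega
  -- Step 2: 3 ∣ n from evenness/divisibility computation.
  have hS : B (∑ i, (C i + 2 • C' i)) (∑ i, (C i + 2 • C' i)) = -6 * n := by
    have hterm : ∀ i j : Fin n, B (C i + 2 • C' i) (C j + 2 • C' j)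
        = if i = j then (-6 : ℤ) else 0 := by
      intro i j
      by_cases hij : i = j
      · subst hij
        have hb : B (C' i) (C i) = 1 := by rw [hsymm]; exact hCC' i
        simp [map_add, map_smul, hCC i, hC'C' i, hCC' i, hb]
      · have h1 : B (C' i) (C j) = 0 := by
          rw [hsymm]; exact hCC'ij j i (Ne.symm hij)
        simp [map_add, map_smul, hCij i j hij, hC'ij i j hij, hCC'ij i j hij, h1, hij]
    simp only [map_sum, LinearMap.sum_apply, Finset.sum_apply]
    simp only [hterm]
    simp [Finset.sum_ite_eq, mul_comm]
  have h9 : (9 : ℤ) * B M M = -6 * n := by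
    have h0 : B (3 • M) (3 • M) = -6 * n := by rw [hM]; exact hS
    simp only [map_nsmul, LinearMap.smul_apply, nsmul_eq_mul, Nat.cast_ofNat] at h0
    linarith
  have h3n : 3 ∣ n := by
    have : (3 : ℤ) * B M M = -2 * n := by linarith
    have hd : (3 : ℤ) ∣ 2 * n := ⟨-B M M, by linarith⟩
    have : (3 : ℤ) ∣ (n : ℤ) := by omega
    exact_mod_cast this
  omega
end

section
/- Let ℓ be a natural number with ℓ ≤ 3, and let V be a ℚ-vector space with a symmetric bilinear form ⟨·,·⟩. Suppose given vectors E₂ⁱ, E₃ⁱ ∈ V for i ∈ Fin (10 − 3ℓ), vectors C_{j,k}ⁱ ∈ V for i ∈ Fin ℓ, j ∈ {1,2,3}, k ∈ {1,2}, and vectors s, F, ξ ∈ V, such that the family consisting of all E₂ⁱ, E₃ⁱ, all C_{j,k}ⁱ, s and F is a basis of V, and the following hold: ⟨F,F⟩ = 0; ⟨F,E₂ⁱ⟩ = ⟨F,E₃ⁱ⟩ = 0 for all i; ⟨F,C_{j,k}ⁱ⟩ = 0 for all i,j,k; ⟨F,s⟩ = 1; ⟨ξ,F⟩ = 3; ⟨E₂ⁱ,E₂ⁱ⟩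 = ⟨E₃ⁱ,E₃ⁱ⟩ = −2 and ⟨E₂ⁱ,E₃ⁱ⟩ = 1 for all i, while E-vectors belonging to distinct indices i are orthogonal; ⟨C_{j,k}ⁱ,C_{j,k}ⁱ⟩ = −2 for all i,j,k, ⟨C_{j,1}ⁱ,C_{j,2}ⁱ⟩ = 1 for all i,j, and C-vectors with distinct index i or distinct index j are orthogonal; every E-vector is orthogonal to every C-vector; ⟨ξ,E₂ⁱ⟩ = ⟨ξ,E₃ⁱ⟩ = 1 for all i; ⟨ξ,C_{j,k}ⁱ⟩ = 0 for all i,j,k; ⟨s,E₂ⁱ⟩ = ⟨s,E₃ⁱ⟩ = 0 for all i; ⟨s,C_{1,1}ⁱ⟩ = 1 for all i and ⟨s,C_{j,k}ⁱ⟩ = 0 for (j,k) ≠ (1,1); ⟨s,s⟩ = −2; ⟨ξ,ξ⟩ = −2. Then ξ = −Σ_{i}(E₂ⁱ + E₃ⁱ) + Σ_{i}(2•C_{1,1}ⁱ + C_{1,2}ⁱ) + 3•s + (6 − 2ℓ)•F. -/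
/-- Theorem 9.4 of the paper: expression of the curve of cusps `ξ` of a quasi-elliptic
K3 surface with `ℓ` fibers of type IV* and `10 - 3ℓ` fibers of type IV, in terms of
the basis of `NS(X) ⊗ ℚ` given by fiber components, a section `s` and the fiber `F`. -/
theorem stmt1 (ℓ : ℕ) (hℓ : ℓ ≤ 3)
    (V : Type*) [AddCommGroup V] [Module ℚ V]
    (B : V →ₗ[ℚ] V →ₗ[ℚ] ℚ)
    (hsymm : ∀ x y, B x y = B y x)
    (E₂ E₃ : Fin (10 - 3 * ℓ) → V)
    (Cv : Fin ℓ → Fin 3 → Fin 2 → V)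
    (s F ξ : V)
    (hindep : LinearIndependent ℚ
      (Sum.elim (Sum.elim E₂ E₃)
        (Sum.elim (fun p : Fin ℓ × Fin 3 × Fin 2 => Cv p.1 p.2.1 p.2.2)
          (Sum.elim (fun _ : Unit => s) (fun _ : Unit => F)))))
    (hspan : Submodule.span ℚ (Set.range
      (Sum.elim (Sum.elim E₂ E₃)
        (Sum.elim (fun p : Fin ℓ × Fin 3 × Fin 2 => Cv p.1 p.2.1 p.2.2)
          (Sum.elim (fun _ : Unit => s) (fun _ : Unit => F))))) = ⊤)
    (hFF : B F F = 0)
    (hFE₂ : ∀ i, B F (E₂ i) = 0)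
    (hFE₃ : ∀ i, B F (E₃ i) = 0)
    (hFC : ∀ i j k, B F (Cv i j k) = 0)
    (hFs : B F s = 1)
    (hξF : B ξ F = 3)
    (hE₂E₂ : ∀ i, B (E₂ i) (E₂ i) = -2)
    (hE₃E₃ : ∀ i, B (E₃ i) (E₃ i) = -2)
    (hE₂E₃ : ∀ i, B (E₂ i) (E₃ i) = 1)
    (hE₂E₂' : ∀ i j, i ≠ j → B (E₂ i) (E₂ j) = 0)
    (hE₃E₃' : ∀ i j, i ≠ j → B (E₃ i) (E₃ j) = 0)
    (hE₂E₃' : ∀ i j, i ≠ j → B (E₂ i) (E₃ j) = 0)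
    (hCvCv : ∀ i j k, B (Cv i j k) (Cv i j k) = -2)
    (hCv12 : ∀ i j, B (Cv i j 0) (Cv i j 1) = 1)
    (hCvorth : ∀ i i' j j' k k', (i ≠ i' ∨ j ≠ j') → B (Cv i j k) (Cv i' j' k') = 0)
    (hE₂Cv : ∀ i i' j k, B (E₂ i) (Cv i' j k) = 0)
    (hE₃Cv : ∀ i i' j k, B (E₃ i) (Cv i' j k) = 0)
    (hξE₂ : ∀ i, B ξ (E₂ i) = 1)
    (hξE₃ : ∀ i, B ξ (E₃ i) = 1)
    (hξCv : ∀ i j k, B ξ (Cv i j k) = 0)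
    (hsE₂ : ∀ i, B s (E₂ i) = 0)
    (hsE₃ : ∀ i, B s (E₃ i) = 0)
    (hsC11 : ∀ i, B s (Cv i 0 0) = 1)
    (hsCv : ∀ i (j : Fin 3) (k : Fin 2), (j, k) ≠ ((0 : Fin 3), (0 : Fin 2)) →
      B s (Cv i j k) = 0)
    (hss : B s s = -2)
    (hξξ : B ξ ξ = -2) :
    ξ = -(∑ i, (E₂ i + E₃ i)) + (∑ i : Fin ℓ, (2 • Cv i 0 0 + Cv i 0 1))
      + 3 • s + ((6 : ℚ) - 2 * ℓ) • F := by
  classical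
  have hmem : ξ ∈ Submodule.span ℚ (Set.range
      (Sum.elim (Sum.elim E₂ E₃)
        (Sum.elim (fun p : Fin ℓ × Fin 3 × Fin 2 => Cv p.1 p.2.1 p.2.2)
          (Sum.elim (fun _ : Unit => s) (fun _ : Unit => F))))) := by
    rw [hspan]; trivial
  rw [Submodule.mem_span_range_iff_exists_fun] at hmem
  obtain ⟨c, hc⟩ := hmem
  -- if-then-else forms of the pairings
  have bE2E2 : ∀ i i', B (E₂ i) (E₂ i') = if i' = i then -2 else 0 := by
    intro i i'
    by_cases h : i' = i
    · subst h; simp [hE₂E₂]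
    · simp [h, hE₂E₂' i i' (Ne.symm h)]
  have bE3E3 : ∀ i i', B (E₃ i) (E₃ i') = if i' = i then -2 else 0 := by
    intro i i'
    by_cases h : i' = i
    · subst h; simp [hE₃E₃]
    · simp [h, hE₃E₃' i i' (Ne.symm h)]
  have bE2E3 : ∀ i i', B (E₂ i) (E₃ i') = if i' = i then 1 else 0 := by
    intro i i'
    by_cases h : i' = i
    · subst h; simp [hE₂E₃]
    · simp [h, hE₂E₃' i i' (Ne.symm h)]
  have bE3E2 : ∀ i i', B (E₃ i) (E₂ i') = if i' = i then 1 else 0 := by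
    intro i i'
    rw [hsymm]
    by_cases h : i' = i
    · subst h; simp [hE₂E₃]
    · simp [h, hE₂E₃' i' i h]
  have bCC : ∀ (i i' : Fin ℓ) (j j' : Fin 3) (k k' : Fin 2),
      B (Cv i j k) (Cv i' j' k') =
        if i' = i then (if j' = j then (if k' = k then -2 else 1) else 0) else 0 := by
    intro i i' j j' k k'
    by_cases h1 : i' = i
    · subst h1
      rw [if_pos rfl]
      by_cases h2 : j' = j
      · subst h2
        rw [if_pos rfl]
        by_cases h3 : k' = k
        · subst h3; simp [hCvCv]
        · rw [if_neg h3]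
          fin_cases k <;> fin_cases k' <;>
            first
              | exact absurd rfl h3
              | exact hCv12 _ _
              | (rw [hsymm]; exact hCv12 _ _)
      · rw [if_neg h2]
        exact hCvorth _ _ _ _ _ _ (Or.inr (Ne.symm h2))
    · rw [if_neg h1]
      exact hCvorth _ _ _ _ _ _ (Or.inl (Ne.symm h1))
  have bsC : ∀ (i : Fin ℓ) (j : Fin 3) (k : Fin 2),
      B s (Cv i j k) = if j = 0 then (if k = 0 then 1 else 0) else 0 := by
    intro i j k
    by_cases h1 : j = 0
    · subst h1
      rw [if_pos rfl]
      by_cases h2 : k = 0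
      · subst h2; simp [hsC11]
      · rw [if_neg h2]
        exact hsCv i 0 k (by simpa [Prod.ext_iff] using h2)
    · rw [if_neg h1]
      exact hsCv i j k (by simpa [Prod.ext_iff] using fun h => absurd h h1)
  -- expansion of B x ξ
  have expand : ∀ x : V, B x ξ =
      (∑ i, c (Sum.inl (Sum.inl i)) * B x (E₂ i))
      + (∑ i, c (Sum.inl (Sum.inr i)) * B x (E₃ i))
      + (∑ i, ∑ j, ∑ k, c (Sum.inr (Sum.inl (i, j, k))) * B x (Cv i j k))
      + c (Sum.inr (Sum.inr (Sum.inl ()))) * B x s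
      + c (Sum.inr (Sum.inr (Sum.inr ()))) * B x F := by
    intro x
    rw [← hc]
    simp only [map_sum, map_smul, smul_eq_mul, Fintype.sum_sum_type,
      Fintype.sum_prod_type, Sum.elim_inl, Sum.elim_inr]
    simp
    ring
  -- coefficient of s equals 3
  have hα : c (Sum.inr (Sum.inr (Sum.inl ()))) = 3 := by
    have h := expand F
    rw [hsymm F ξ, hξF] at h
    simp only [hFE₂, hFE₃, hFC, hFs, hFF, mul_zero, mul_one,
      Finset.sum_const_zero, add_zero, zero_add] at h
    linarith
  -- E coefficients
  have hA : ∀ i, c (Sum.inl (Sum.inl i)) = -1 ∧ c (Sum.inl (Sum.inr i)) = -1 := by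
    intro i
    have h1 := expand (E₂ i)
    rw [hsymm (E₂ i) ξ, hξE₂ i] at h1
    simp only [bE2E2, bE2E3, hE₂Cv, hsymm (E₂ i) s, hsE₂, hsymm (E₂ i) F, hFE₂,
      mul_ite, mul_zero, mul_one, mul_neg, Finset.sum_ite_eq', Finset.mem_univ,
      if_true, Finset.sum_const_zero, add_zero, zero_add] at h1
    have h2 := expand (E₃ i)
    rw [hsymm (E₃ i) ξ, hξE₃ i] at h2
    simp only [bE3E2, bE3E3, hE₃Cv, hsymm (E₃ i) s, hsE₃, hsymm (E₃ i) F, hFE₃,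
      mul_ite, mul_zero, mul_one, mul_neg, Finset.sum_ite_eq', Finset.mem_univ,
      if_true, Finset.sum_const_zero, add_zero, zero_add] at h2
    constructor <;> linarith
  have hA₂ : ∀ i, c (Sum.inl (Sum.inl i)) = -1 := fun i => (hA i).1
  have hA₃ : ∀ i, c (Sum.inl (Sum.inr i)) = -1 := fun i => (hA i).2
  -- C coefficient equations
  have hCeq : ∀ (i : Fin ℓ) (j : Fin 3) (k : Fin 2),
      (∑ i', ∑ j', ∑ k', c (Sum.inr (Sum.inl (i', j', k'))) * B (Cv i j k) (Cv i' j' k'))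
        + c (Sum.inr (Sum.inr (Sum.inl ()))) * B s (Cv i j k) = 0 := by
    intro i j k
    have h := expand (Cv i j k)
    rw [hsymm (Cv i j k) ξ, hξCv i j k] at h
    rw [hsymm (Cv i j k) s] at h
    simp only [hsymm (Cv i j k) (E₂ _), hsymm (Cv i j k) (E₃ _), hE₂Cv, hE₃Cv,
      hsymm (Cv i j k) F, hFC, mul_zero, Finset.sum_const_zero, add_zero, zero_add] at h
    linarith
  have hC0 : ∀ i : Fin ℓ, c (Sum.inr (Sum.inl (i, 0, 0))) = 2
      ∧ c (Sum.inr (Sum.inl (i, 0, 1))) = 1 := by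
    intro i
    have h1 := hCeq i 0 0
    have h2 := hCeq i 0 1
    simp only [bCC, bsC, hα] at h1 h2
    simp [-Prod.mk_zero_zero, Fin.sum_univ_three, Fin.sum_univ_two, mul_ite, mul_zero,
      mul_one, mul_neg, Finset.sum_add_distrib, Finset.sum_ite_eq', Finset.mem_univ] at h1 h2
    constructor <;> linarith
  have hC00 : ∀ i : Fin ℓ, c (Sum.inr (Sum.inl (i, 0, 0))) = 2 := fun i => (hC0 i).1
  have hC01 : ∀ i : Fin ℓ, c (Sum.inr (Sum.inl (i, 0, 1))) = 1 := fun i => (hC0 i).2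
  have hCrest : ∀ (i : Fin ℓ) (j : Fin 3) (k : Fin 2), j ≠ 0 →
      c (Sum.inr (Sum.inl (i, j, k))) = 0 := by
    intro i j k hj
    have h1 := hCeq i j 0
    have h2 := hCeq i j 1
    simp only [bsC, if_neg hj, mul_zero, add_zero] at h1 h2
    simp only [bCC] at h1 h2
    simp [-Prod.mk_zero_zero, Fin.sum_univ_two, mul_ite, mul_zero, mul_one, mul_neg,
      Finset.sum_add_distrib, Finset.sum_ite_eq', Finset.mem_univ] at h1 h2
    have e0 : c (Sum.inr (Sum.inl (i, j, 0))) = 0 := by linarith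
    have e1 : c (Sum.inr (Sum.inl (i, j, 1))) = 0 := by linarith
    fin_cases k
    · exact e0
    · exact e1
  -- the value of B s ξ
  have hsξ : B s ξ = 2 * ℓ - 6 + c (Sum.inr (Sum.inr (Sum.inr ()))) := by
    have h := expand s
    rw [hsymm s F, hFs] at h
    simp only [hsE₂, hsE₃, bsC, hss, mul_zero, mul_one, Finset.sum_const_zero,
      add_zero, zero_add, hα] at h
    rw [h]
    have : ∀ i : Fin ℓ, (∑ j : Fin 3, ∑ k : Fin 2, c (Sum.inr (Sum.inl (i, j, k))) *
        (if j = 0 then (if k = 0 then (1:ℚ) else 0) else 0)) = 2 := by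
      intro i
      simp [-Prod.mk_zero_zero, Fin.sum_univ_three, Fin.sum_univ_two, hC00 i]
    rw [Finset.sum_congr rfl (fun i _ => this i)]
    simp [Finset.sum_const, mul_comm]
    ring
  -- the coefficient of F
  have hcard : ((10 - 3 * ℓ : ℕ) : ℚ) = 10 - 3 * ℓ := by
    have h3 : 3 * ℓ ≤ 10 := by omega
    push_cast [Nat.cast_sub h3]
    ring
  have hβ : c (Sum.inr (Sum.inr (Sum.inr ()))) = 6 - 2 * ℓ := by
    have h := expand ξ
    rw [hξξ, hξF, hsymm ξ s, hsξ] at h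
    simp only [hξE₂, hξE₃, hξCv, mul_one, mul_zero, Finset.sum_const_zero,
      add_zero, hα] at h
    rw [Finset.sum_congr rfl (fun i _ => hA₂ i),
      Finset.sum_congr rfl (fun i _ => hA₃ i), Finset.sum_const] at h
    simp only [Finset.card_univ, Fintype.card_fin, nsmul_eq_mul, hcard] at h
    linarith
  -- assemble
  rw [← hc]
  simp only [Fintype.sum_sum_type, Fintype.sum_prod_type]
  simp only [-Prod.mk_zero_zero, Sum.elim_inl, Sum.elim_inr, Fintype.sum_unique, Fin.sum_univ_three,
    Fin.sum_univ_two, hA₂, hA₃, hC00, hC01, hα, hβ,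
    hCrest _ 1 _ (by decide), hCrest _ 2 _ (by decide), zero_smul, add_zero,
    neg_smul, one_smul]
  have h2s : ∀ v : V, (2 : ℕ) • v = (2 : ℚ) • v := by
    intro v; rw [← Nat.cast_smul_eq_nsmul ℚ 2 v]; norm_num
  have h3s : (3 : ℕ) • s = (3 : ℚ) • s := by
    rw [← Nat.cast_smul_eq_nsmul ℚ 3 s]; norm_num
  simp only [h2s, h3s, Finset.sum_add_distrib, Finset.sum_neg_distrib, neg_add]
  abel
end

section
/- Let V be a ℚ-vector space with a symmetric bilinear form ⟨·,·⟩, and let E₁ⁱ, E₂ⁱ (i ∈ Fin 10), C, F, ξ be vectors in V such that the family consisting of all E₁ⁱ, E₂ⁱ together with C and F is a basis of V, and the following hold: ⟨E₁ⁱ,E₁ⁱ⟩ = ⟨E₂ⁱ,E₂ⁱ⟩ = −2 and ⟨E₁ⁱ,E₂ⁱ⟩ = 1 for all i, while E-vectors belonging to distinct indices i are orthogonal; ⟨F,F⟩ = 0; ⟨F,E₁ⁱ⟩ = ⟨F,E₂ⁱ⟩ = 0 for all i; ⟨F,C⟩ = 3; ⟨ξ,F⟩ = 3; ⟨C,C⟩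 = −2; ⟨C,E₁ⁱ⟩ = 1 for all i ∈ Fin 10; ⟨C,E₂ⁱ⟩ = 0 for i = 1,…,9 and ⟨C,E₂¹⁰⟩ = 1; ⟨ξ,E₁ⁱ⟩ = ⟨ξ,E₂ⁱ⟩ = 1 for all i; ⟨ξ,ξ⟩ = −2. Then ξ = −(1/3)•Σ_{i=1}^{9}(E₁ⁱ + 2•E₂ⁱ) + C + 2•F; in particular Σ_{i=1}^{9}(E₁ⁱ + 2•E₂ⁱ) = 3•(C + 2•F − ξ). -/
/-!
Put `S = ∑_{i<9} (E₁ⁱ + 2E₂ⁱ)` and `R = -S/3 + C + 2F`. A direct computation shows that `R`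
has the same intersection numbers as `ξ` with every `E₁ⁱ`, `E₂ⁱ` and with `F`, and that
`R² = -2 = ξ²`. Since the `E`'s span mutually orthogonal negative definite `A₂` lattices and
`F` is isotropic with `F·C ≠ 0`, the orthogonal complement of the `E`'s and `F` is `ℚF`, so
`ξ = R + φF`; then `ξ² = R² + 2φ (F·R)` with `F·R = 3` forces `φ = 0`.
-/

open Finset

section

variable {ι V : Type*} [AddCommGroup V] [Module ℚ V]

/-- `E₁ i, E₂ i` model two of the three components of the `i`-th fibre of type `IV`:
they span mutually orthogonal copies of the negative definite `A₂` lattice. -/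
structure IsA₂Family (B : V →ₗ[ℚ] V →ₗ[ℚ] ℚ) (E₁ E₂ : ι → V) : Prop where
  apply₁₁ : ∀ i, B (E₁ i) (E₁ i) = -2
  apply₂₂ : ∀ i, B (E₂ i) (E₂ i) = -2
  apply₁₂ : ∀ i, B (E₁ i) (E₂ i) = 1
  apply₁₁_of_ne : ∀ i j, i ≠ j → B (E₁ i) (E₁ j) = 0
  apply₂₂_of_ne : ∀ i j, i ≠ j → B (E₂ i) (E₂ j) = 0
  apply₁₂_of_ne : ∀ i j, i ≠ j → B (E₁ i) (E₂ j) = 0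

variable {B : V →ₗ[ℚ] V →ₗ[ℚ] ℚ} {E₁ E₂ : ι → V}

theorem apply_sum_add_two_smul_eq_card_mul (x : V) (T : Finset ι) {c : ℚ}
    (h : ∀ i ∈ T, B x (E₁ i) + 2 * B x (E₂ i) = c) :
    B x (∑ i ∈ T, (E₁ i + 2 • E₂ i)) = T.card * c := by
  rw [map_sum, ← nsmul_eq_mul, ← sum_const]
  refine sum_congr rfl fun i hi => ?_
  rw [← h i hi, map_add, map_nsmul, nsmul_eq_mul]
  norm_num

theorem eq_of_sub_eq_smul_of_apply_self_eq (hsymm : ∀ x y, B x y = B y x) {F x y : V} {φ : ℚ}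
    (hFF : B F F = 0) (hFy : B F y ≠ 0) (hxy : x - y = φ • F) (hsq : B x x = B y y) :
    x = y := by
  rw [sub_eq_iff_eq_add'] at hxy
  simp only [hxy, map_add, map_smul, LinearMap.add_apply, LinearMap.smul_apply, smul_eq_mul,
    hFF, hsymm y F] at hsq
  have hφ : φ = 0 := by
    have : 2 * φ * B F y = 0 := by linear_combination hsq
    simpa [hFy] using this
  rw [hxy, hφ, zero_smul, add_zero]

theorem apply_sum_smul_eq_of_forall_ne [Fintype ι] (x : V) (E : ι → V) (a : ι → ℚ) (j : ι)
    (h : ∀ i ≠ j, B x (E i) = 0) :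
    B x (∑ i, a i • E i) = a j * B x (E j) := by
  simp only [map_sum, map_smul, smul_eq_mul]
  exact Fintype.sum_eq_single j fun i hi => by rw [h i hi, mul_zero]

namespace IsA₂Family

theorem apply_E₁_sum (hA : IsA₂Family B E₁ E₂) (T : Finset ι) (j : ι) :
    B (E₁ j) (∑ i ∈ T, (E₁ i + 2 • E₂ i)) = 0 := by
  rw [apply_sum_add_two_smul_eq_card_mul _ T fun i _ => ?_, mul_zero]
  rcases eq_or_ne j i with rfl | hji
  · rw [hA.apply₁₁, hA.apply₁₂]; norm_num
  · rw [hA.apply₁₁_of_ne j i hji, hA.apply₁₂_of_ne j i hji]; norm_num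

theorem apply_E₂_sum [DecidableEq ι] (hA : IsA₂Family B E₁ E₂) (hsymm : ∀ x y, B x y = B y x)
    (T : Finset ι) (j : ι) :
    B (E₂ j) (∑ i ∈ T, (E₁ i + 2 • E₂ i)) = if j ∈ T then -3 else 0 := by
  have hterm : ∀ i, B (E₂ j) (E₁ i + 2 • E₂ i) = if j = i then -3 else 0 := fun i => by
    rw [map_add, map_nsmul, nsmul_eq_mul, hsymm]
    split_ifs with hji
    · subst hji; rw [hA.apply₁₂, hA.apply₂₂]; norm_num
    · rw [hA.apply₁₂_of_ne i j (Ne.symm hji), hA.apply₂₂_of_ne j i hji]; norm_num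
  simp only [map_sum, hterm, sum_ite_eq]

theorem apply_sum_sum (hA : IsA₂Family B E₁ E₂) (hsymm : ∀ x y, B x y = B y x)
    (T : Finset ι) :
    B (∑ i ∈ T, (E₁ i + 2 • E₂ i)) (∑ i ∈ T, (E₁ i + 2 • E₂ i)) = -6 * T.card := by
  classical
  rw [apply_sum_add_two_smul_eq_card_mul _ T fun i hi => ?_, mul_comm]
  rw [hsymm _ (E₁ i), hsymm _ (E₂ i), hA.apply_E₁_sum, hA.apply_E₂_sum hsymm, if_pos hi]
  norm_num

theorem eq_smul_of_forall_apply_eq_zero [Fintype ι] (hA : IsA₂Family B E₁ E₂)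
    (hsymm : ∀ x y, B x y = B y x) {C F : V} (hFE₁ : ∀ i, B F (E₁ i) = 0)
    (hFE₂ : ∀ i, B F (E₂ i) = 0) (hFC : B F C ≠ 0) (hFF : B F F = 0)
    {a b : ι → ℚ} {γ φ : ℚ} {v : V}
    (hv : v = ∑ i, a i • E₁ i + ∑ i, b i • E₂ i + γ • C + φ • F)
    (h₁ : ∀ i, B (E₁ i) v = 0) (h₂ : ∀ i, B (E₂ i) v = 0) (hF : B F v = 0) :
    v = φ • F := by
  have hγ : γ = 0 := by
    simp only [hv, map_add, map_sum, map_smul, hFE₁, hFE₂, hFF, smul_eq_mul, mul_zero,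
      sum_const_zero, zero_add, add_zero] at hF
    exact (mul_eq_zero.mp hF).resolve_right hFC
  have hab : ∀ j, a j = 0 ∧ b j = 0 := fun j => by
    have e₁ := h₁ j
    have e₂ := h₂ j
    rw [hv, hγ, zero_smul, add_zero, map_add, map_add, map_smul, smul_eq_mul, hsymm _ F,
      apply_sum_smul_eq_of_forall_ne _ _ _ j fun i hi => hA.apply₁₁_of_ne j i hi.symm,
      apply_sum_smul_eq_of_forall_ne _ _ _ j fun i hi => hA.apply₁₂_of_ne j i hi.symm,
      hFE₁, hA.apply₁₁, hA.apply₁₂] at e₁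
    rw [hv, hγ, zero_smul, add_zero, map_add, map_add, map_smul, smul_eq_mul, hsymm _ F,
      apply_sum_smul_eq_of_forall_ne _ _ _ j fun i hi => by rw [hsymm, hA.apply₁₂_of_ne i j hi],
      apply_sum_smul_eq_of_forall_ne _ _ _ j fun i hi => hA.apply₂₂_of_ne j i hi.symm,
      hFE₂, hsymm _ (E₁ j), hA.apply₁₂, hA.apply₂₂] at e₂
    -- `e₁ : -2 a j + b j = 0` and `e₂ : a j - 2 b j = 0`, a system of determinant `3`
    constructor <;> linarith
  simp [hv, hγ, fun j => (hab j).1, fun j => (hab j).2]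

theorem eq_of_apply_eq [Fintype ι] (hA : IsA₂Family B E₁ E₂)
    (hsymm : ∀ x y, B x y = B y x) {C F : V}
    (hspan : Submodule.span ℚ (Set.range
      (Sum.elim (Sum.elim E₁ E₂) (Sum.elim (fun _ : Unit => C) (fun _ : Unit => F)))) = ⊤)
    (hFE₁ : ∀ i, B F (E₁ i) = 0) (hFE₂ : ∀ i, B F (E₂ i) = 0) (hFC : B F C ≠ 0)
    (hFF : B F F = 0) {x y : V} (h₁ : ∀ i, B (E₁ i) x = B (E₁ i) y)
    (h₂ : ∀ i, B (E₂ i) x = B (E₂ i) y) (hF : B F x = B F y) (hFy : B F y ≠ 0)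
    (hsq : B x x = B y y) :
    x = y := by
  obtain ⟨c, hc⟩ := (Submodule.mem_span_range_iff_exists_fun ℚ).mp
    (hspan.symm ▸ Submodule.mem_top (x := x - y))
  have hxy : x - y = c (.inr (.inr ())) • F :=
    hA.eq_smul_of_forall_apply_eq_zero hsymm hFE₁ hFE₂ hFC hFF
      (a := fun i => c (.inl (.inl i))) (b := fun i => c (.inl (.inr i))) (γ := c (.inr (.inl ())))
      (by simp [← hc, Fintype.sum_sum_type, add_assoc])
      (fun i => by rw [map_sub, h₁, sub_self]) (fun i => by rw [map_sub, h₂, sub_self])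
      (by rw [map_sub, hF, sub_self])
  exact eq_of_sub_eq_smul_of_apply_self_eq hsymm hFF hFy hxy hsq

end IsA₂Family

end

theorem stmt2_general (V : Type*) [AddCommGroup V] [Module ℚ V]
    (B : V →ₗ[ℚ] V →ₗ[ℚ] ℚ)
    (hsymm : ∀ x y, B x y = B y x)
    (E₁ E₂ : Fin 10 → V) (C F ξ : V)
    (hspan : Submodule.span ℚ (Set.range
      (Sum.elim (Sum.elim E₁ E₂)
        (Sum.elim (fun _ : Unit => C) (fun _ : Unit => F)))) = ⊤)
    (hE₁E₁ : ∀ i, B (E₁ i) (E₁ i) = -2)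
    (hE₂E₂ : ∀ i, B (E₂ i) (E₂ i) = -2)
    (hE₁E₂ : ∀ i, B (E₁ i) (E₂ i) = 1)
    (hE₁E₁' : ∀ i j, i ≠ j → B (E₁ i) (E₁ j) = 0)
    (hE₂E₂' : ∀ i j, i ≠ j → B (E₂ i) (E₂ j) = 0)
    (hE₁E₂' : ∀ i j, i ≠ j → B (E₁ i) (E₂ j) = 0)
    (hFF : B F F = 0)
    (hFE₁ : ∀ i, B F (E₁ i) = 0)
    (hFE₂ : ∀ i, B F (E₂ i) = 0)
    (hFC : B F C = 3)
    (hξF : B ξ F = 3)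
    (hCC : B C C = -2)
    (hCE₁ : ∀ i, B C (E₁ i) = 1)
    (hCE₂ : ∀ i : Fin 10, (i : ℕ) < 9 → B C (E₂ i) = 0)
    (hCE₂ten : B C (E₂ 9) = 1)
    (hξE₁ : ∀ i, B ξ (E₁ i) = 1)
    (hξE₂ : ∀ i, B ξ (E₂ i) = 1)
    (hξξ : B ξ ξ = -2) :
    ξ = -((1 : ℚ) / 3) •
        (∑ i ∈ Finset.univ.filter (fun i : Fin 10 => (i : ℕ) < 9), (E₁ i + 2 • E₂ i))
        + C + 2 • F ∧
    (∑ i ∈ Finset.univ.filter (fun i : Fin 10 => (i : ℕ) < 9), (E₁ i + 2 • E₂ i))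
      = 3 • (C + 2 • F - ξ) := by
  have hA : IsA₂Family B E₁ E₂ := ⟨hE₁E₁, hE₂E₂, hE₁E₂, hE₁E₁', hE₂E₂', hE₁E₂'⟩
  set T := Finset.univ.filter fun i : Fin 10 => (i : ℕ) < 9
  set S := ∑ i ∈ T, (E₁ i + 2 • E₂ i)
  have hT : (T.card : ℚ) = 9 := by norm_cast
  have hCE₂T : ∀ i, B C (E₂ i) = if i ∈ T then 0 else 1 := fun i => by
    split_ifs with hi
    · exact hCE₂ i (by simpa [T] using hi)
    · obtain rfl : i = 9 := Fin.ext (by simp [T] at hi; omega)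
      exact hCE₂ten
  have hCS : B C S = 9 := by
    rw [apply_sum_add_two_smul_eq_card_mul C T (c := 1) fun i hi => by
      rw [hCE₁, hCE₂T, if_pos hi]; norm_num, hT, mul_one]
  have hFS : B F S = 0 := by
    rw [apply_sum_add_two_smul_eq_card_mul F T (c := 0) fun i _ => by
      rw [hFE₁, hFE₂]; norm_num, mul_zero]
  have hSS : B S S = -54 := by rw [hA.apply_sum_sum hsymm, hT]; norm_num
  set R := -((1 : ℚ) / 3) • S + C + 2 • F
  have hR : ∀ x, B x R = -(1 / 3) * B x S + B x C + 2 * B x F := fun x => by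
    simp only [R, map_add, map_smul, map_nsmul, smul_eq_mul, nsmul_eq_mul]; norm_num
  have hFR : B F R = 3 := by rw [hR, hFS, hFC, hFF]; norm_num
  have hRR : B R R = -2 := by
    rw [hR, hsymm R S, hsymm R C, hsymm R F, hR, hR, hFR, hSS, hCS, hsymm S C, hsymm S F, hCS,
      hFS, hCC, hsymm C F, hFC]
    norm_num
  have hξ : ξ = R := by
    refine hA.eq_of_apply_eq hsymm hspan hFE₁ hFE₂ (by rw [hFC]; norm_num) hFF (fun i => ?_)
      (fun i => ?_) ?_ (by rw [hFR]; norm_num) (hξξ.trans hRR.symm)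
    · rw [hR, hA.apply_E₁_sum, hsymm _ C, hCE₁, hsymm _ F, hFE₁, hsymm, hξE₁]; norm_num
    · rw [hR, hA.apply_E₂_sum hsymm, hsymm _ C, hCE₂T, hsymm _ F, hFE₂, hsymm, hξE₂]
      split_ifs <;> norm_num
    · rw [hFR, hsymm, hξF]
  exact ⟨hξ, by rw [hξ]; module⟩

/-- Theorem 9.8 of the paper: expression of the curve of cusps `ξ` of a quasi-elliptic
K3 surface with 10 fibers of type IV in terms of the fibre components, the 3-section `C`
and the fiber class `F`; in particular `∑_{i=1}^{9} (E₁ⁱ + 2E₂ⁱ)` is divisible by 3. -/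
theorem stmt2 (V : Type*) [AddCommGroup V] [Module ℚ V]
    (B : V →ₗ[ℚ] V →ₗ[ℚ] ℚ)
    (hsymm : ∀ x y, B x y = B y x)
    (E₁ E₂ : Fin 10 → V) (C F ξ : V)
    (hindep : LinearIndependent ℚ
      (Sum.elim (Sum.elim E₁ E₂)
        (Sum.elim (fun _ : Unit => C) (fun _ : Unit => F))))
    (hspan : Submodule.span ℚ (Set.range
      (Sum.elim (Sum.elim E₁ E₂)
        (Sum.elim (fun _ : Unit => C) (fun _ : Unit => F)))) = ⊤)
    (hE₁E₁ : ∀ i, B (E₁ i) (E₁ i) = -2)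
    (hE₂E₂ : ∀ i, B (E₂ i) (E₂ i) = -2)
    (hE₁E₂ : ∀ i, B (E₁ i) (E₂ i) = 1)
    (hE₁E₁' : ∀ i j, i ≠ j → B (E₁ i) (E₁ j) = 0)
    (hE₂E₂' : ∀ i j, i ≠ j → B (E₂ i) (E₂ j) = 0)
    (hE₁E₂' : ∀ i j, i ≠ j → B (E₁ i) (E₂ j) = 0)
    (hFF : B F F = 0)
    (hFE₁ : ∀ i, B F (E₁ i) = 0)
    (hFE₂ : ∀ i, B F (E₂ i) = 0)
    (hFC : B F C = 3)
    (hξF : B ξ F = 3)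
    (hCC : B C C = -2)
    (hCE₁ : ∀ i, B C (E₁ i) = 1)
    (hCE₂ : ∀ i : Fin 10, (i : ℕ) < 9 → B C (E₂ i) = 0)
    (hCE₂ten : B C (E₂ 9) = 1)
    (hξE₁ : ∀ i, B ξ (E₁ i) = 1)
    (hξE₂ : ∀ i, B ξ (E₂ i) = 1)
    (hξξ : B ξ ξ = -2) :
    ξ = -((1 : ℚ) / 3) •
        (∑ i ∈ Finset.univ.filter (fun i : Fin 10 => (i : ℕ) < 9), (E₁ i + 2 • E₂ i))
        + C + 2 • F ∧
    (∑ i ∈ Finset.univ.filter (fun i : Fin 10 => (i : ℕ) < 9), (E₁ i + 2 • E₂ i))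
      = 3 • (C + 2 • F - ξ) :=
  stmt2_general V B hsymm E₁ E₂ C F ξ hspan hE₁E₁ hE₂E₂ hE₁E₂ hE₁E₁' hE₂E₂' hE₁E₂' hFF hFE₁ hFE₂ hFC
    hξF hCC hCE₁ hCE₂ hCE₂ten hξE₁ hξE₂ hξξ
end

section
/- Let V be a ℚ-vector space with a symmetric bilinear form ⟨·,·⟩, and let E₁ⁱ, E₂ⁱ (i ∈ Fin 10), C, F, ξ be vectors in V such that the family consisting of all E₁ⁱ, E₂ⁱ together with C and F is a basis of V, and the following hold: ⟨E₁ⁱ,E₁ⁱ⟩ = ⟨E₂ⁱ,E₂ⁱ⟩ = −2 and ⟨E₁ⁱ,E₂ⁱ⟩ = 1 for all i, while E-vectors belonging to distinct indices i are orthogonal; ⟨F,F⟩ = 0; ⟨F,E₁ⁱ⟩ = ⟨F,E₂ⁱ⟩ = 0 for all i; ⟨F,C⟩ = 3; ⟨ξ,F⟩ = 3; ⟨C,C⟩ = 0; ⟨C,E₁ⁱ⟩ = 1 for all i ∈ Fin 10; ⟨C,E₂ⁱ⟩ = 0 for i = 1,…,6 and ⟨C,E₂ⁱ⟩ = 1 for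 i = 7,…,10; ⟨ξ,E₁ⁱ⟩ = ⟨ξ,E₂ⁱ⟩ = 1 for all i; ⟨ξ,ξ⟩ = −2. Then ξ = −(1/3)•Σ_{i=1}^{6}(E₁ⁱ + 2•E₂ⁱ) + C + F; in particular Σ_{i=1}^{6}(E₁ⁱ + 2•E₂ⁱ) = 3•(C + F − ξ). -/
/-!
Put `s = ∑_{i<6} (E₁ⁱ + 2E₂ⁱ)` and `η = -⅓ s + C + F`. The intersection numbers show that `η` meets
every `E₁ⁱ, E₂ⁱ` and `F` as `ξ` does, and that `η² = -2 = ξ²`. The `Eⁱ` span pairwise orthogonal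
`A₂` lattices (Gram determinant 3), and together with `C` and `F` they span `V`; as `C · F ≠ 0`,
the only vectors orthogonal to all `Eⁱ` and to `F` are the multiples of `F`. Hence `ξ = η + μF`,
and `ξ² = η² + 2μ (η · F)` with `η · F = 3` forces `μ = 0`.
-/

section

variable {K V ι : Type*} [CommRing K] [AddCommGroup V] [Module K V]

theorem exists_eq_sum_smul_add_smul_add_smul [Fintype ι] {E₁ E₂ : ι → V} {C F : V}
    (hspan : Submodule.span K (Set.range (Sum.elim (Sum.elim E₁ E₂)
      (Sum.elim (fun _ : Unit => C) (fun _ : Unit => F)))) = ⊤) (v : V) :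
    ∃ (α β : ι → K) (γ μ : K), v = ∑ i, (α i • E₁ i + β i • E₂ i) + γ • C + μ • F := by
  obtain ⟨c, rfl⟩ :=
    (Submodule.mem_span_range_iff_exists_fun K).1 (hspan ▸ Submodule.mem_top (x := v))
  refine ⟨fun i => c (.inl (.inl i)), fun i => c (.inl (.inr i)), c (.inr (.inl ())),
    c (.inr (.inr ())), ?_⟩
  simp [Fintype.sum_sum_type, Finset.sum_add_distrib, add_assoc]

theorem apply_sum_add_two_smul (B : V →ₗ[K] V →ₗ[K] K) {E₁ E₂ : ι → V} {x : V} {a b : K}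
    {S : Finset ι} (h₁ : ∀ i ∈ S, B x (E₁ i) = a) (h₂ : ∀ i ∈ S, B x (E₂ i) = b) :
    B x (∑ i ∈ S, (E₁ i + 2 • E₂ i)) = S.card * (a + 2 * b) := by
  rw [map_sum, Finset.sum_congr rfl fun i hi => by rw [map_add, map_nsmul, h₁ i hi, h₂ i hi]]
  simp [mul_add]

structure IsOrthogonalA₂Family (B : V →ₗ[K] V →ₗ[K] K) (E₁ E₂ : ι → V) : Prop where
  self_E₁ : ∀ i, B (E₁ i) (E₁ i) = -2
  self_E₂ : ∀ i, B (E₂ i) (E₂ i) = -2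
  E₁_E₂ : ∀ i, B (E₁ i) (E₂ i) = 1
  E₁_E₁_of_ne : ∀ i j, i ≠ j → B (E₁ i) (E₁ j) = 0
  E₂_E₂_of_ne : ∀ i j, i ≠ j → B (E₂ i) (E₂ j) = 0
  E₁_E₂_of_ne : ∀ i j, i ≠ j → B (E₁ i) (E₂ j) = 0

namespace IsOrthogonalA₂Family

variable [DecidableEq ι] {B : V →ₗ[K] V →ₗ[K] K} {E₁ E₂ : ι → V}

theorem sum_apply_E₁ (hE : IsOrthogonalA₂Family B E₁ E₂) (hsymm : ∀ x y, B x y = B y x)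
    (S : Finset ι) (x y : ι → K) (k : ι) :
    B (∑ i ∈ S, (x i • E₁ i + y i • E₂ i)) (E₁ k) = if k ∈ S then -2 * x k + y k else 0 := by
  have hterm : ∀ i, B (x i • E₁ i + y i • E₂ i) (E₁ k) = if k = i then -2 * x k + y k else 0 := by
    intro i
    rcases eq_or_ne k i with rfl | hki
    · rw [if_pos rfl]
      simp only [map_add, map_smul, LinearMap.add_apply, LinearMap.smul_apply, smul_eq_mul,
        hE.self_E₁, hsymm (E₂ k), hE.E₁_E₂]
      ring
    · simp [hki, hE.E₁_E₁_of_ne i k hki.symm, hsymm (E₂ i), hE.E₁_E₂_of_ne k i hki]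
  simp only [map_sum, LinearMap.coe_sum, Finset.sum_apply, hterm, Finset.sum_ite_eq]

theorem sum_apply_E₂ (hE : IsOrthogonalA₂Family B E₁ E₂)
    (S : Finset ι) (x y : ι → K) (k : ι) :
    B (∑ i ∈ S, (x i • E₁ i + y i • E₂ i)) (E₂ k) = if k ∈ S then x k - 2 * y k else 0 := by
  have hterm : ∀ i, B (x i • E₁ i + y i • E₂ i) (E₂ k) = if k = i then x k - 2 * y k else 0 := by
    intro i
    rcases eq_or_ne k i with rfl | hki
    · rw [if_pos rfl]
      simp only [map_add, map_smul, LinearMap.add_apply, LinearMap.smul_apply, smul_eq_mul,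
        hE.self_E₂, hE.E₁_E₂]
      ring
    · simp [hki, hE.E₂_E₂_of_ne i k hki.symm, hE.E₁_E₂_of_ne i k hki.symm]
  simp only [map_sum, LinearMap.coe_sum, Finset.sum_apply, hterm, Finset.sum_ite_eq]

variable [Fintype ι] [IsDomain K] {C F : V}

theorem exists_eq_smul_of_orthogonal (hE : IsOrthogonalA₂Family B E₁ E₂)
    (hsymm : ∀ x y, B x y = B y x) (h3 : (3 : K) ≠ 0)
    (hspan : Submodule.span K (Set.range (Sum.elim (Sum.elim E₁ E₂)
      (Sum.elim (fun _ : Unit => C) (fun _ : Unit => F)))) = ⊤)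
    (hFE₁ : ∀ i, B F (E₁ i) = 0) (hFE₂ : ∀ i, B F (E₂ i) = 0) (hFF : B F F = 0)
    (hFC : B F C ≠ 0) {v : V} (h₁ : ∀ k, B v (E₁ k) = 0) (h₂ : ∀ k, B v (E₂ k) = 0)
    (hF : B v F = 0) : ∃ μ : K, v = μ • F := by
  obtain ⟨α, β, γ, μ, rfl⟩ := exists_eq_sum_smul_add_smul_add_smul hspan v
  have hγ : γ = 0 := by
    rw [hsymm] at hF
    simp only [map_add, map_sum, map_smul, smul_eq_mul, hFE₁, hFE₂, hFF, mul_zero,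
      Finset.sum_const_zero, add_zero, zero_add, mul_eq_zero] at hF
    exact hF.resolve_right hFC
  have hαβ : ∀ k, α k = 0 ∧ β k = 0 := by
    intro k
    have e₁ := h₁ k
    have e₂ := h₂ k
    simp only [map_add, map_smul, LinearMap.add_apply, LinearMap.smul_apply,
      hE.sum_apply_E₁ hsymm, hE.sum_apply_E₂, hγ, hFE₁, hFE₂, Finset.mem_univ, if_true,
      zero_smul, smul_zero, add_zero] at e₁ e₂
    have h3α : 3 * α k = 0 := by linear_combination (-2) * e₁ - e₂
    have hα : α k = 0 := (mul_eq_zero.1 h3α).resolve_left h3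
    exact ⟨hα, by linear_combination e₁ + 2 * hα⟩
  exact ⟨μ, by simp [hγ, fun k => (hαβ k).1, fun k => (hαβ k).2]⟩

theorem eq_of_apply_eq (hE : IsOrthogonalA₂Family B E₁ E₂)
    (hsymm : ∀ x y, B x y = B y x) (h2 : (2 : K) ≠ 0) (h3 : (3 : K) ≠ 0)
    (hspan : Submodule.span K (Set.range (Sum.elim (Sum.elim E₁ E₂)
      (Sum.elim (fun _ : Unit => C) (fun _ : Unit => F)))) = ⊤)
    (hFE₁ : ∀ i, B F (E₁ i) = 0) (hFE₂ : ∀ i, B F (E₂ i) = 0) (hFF : B F F = 0)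
    (hFC : B F C ≠ 0) {ξ η : V} (h₁ : ∀ k, B ξ (E₁ k) = B η (E₁ k))
    (h₂ : ∀ k, B ξ (E₂ k) = B η (E₂ k)) (hF : B ξ F = B η F) (hηF : B η F ≠ 0)
    (hsq : B ξ ξ = B η η) : ξ = η := by
  obtain ⟨μ, hμ⟩ := hE.exists_eq_smul_of_orthogonal hsymm h3 hspan hFE₁ hFE₂ hFF hFC
    (v := ξ - η) (by simp [h₁]) (by simp [h₂]) (by simp [hF])
  rw [sub_eq_iff_eq_add'] at hμ
  have h2μ : 2 * μ * B η F = 0 := by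
    rw [hμ] at hsq
    simp only [map_add, map_smul, LinearMap.add_apply, LinearMap.smul_apply, smul_eq_mul, hsymm F η, hFF, mul_zero,
      add_zero] at hsq
    linear_combination hsq
  have hμ0 : μ = 0 := by simpa [h2, hηF] using h2μ
  rw [hμ, hμ0, zero_smul, add_zero]

end IsOrthogonalA₂Family

end

theorem stmt3_general (V : Type*) [AddCommGroup V] [Module ℚ V]
    (B : V →ₗ[ℚ] V →ₗ[ℚ] ℚ)
    (hsymm : ∀ x y, B x y = B y x)
    (E₁ E₂ : Fin 10 → V) (C F ξ : V)
    (hspan : Submodule.span ℚ (Set.range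
      (Sum.elim (Sum.elim E₁ E₂)
        (Sum.elim (fun _ : Unit => C) (fun _ : Unit => F)))) = ⊤)
    (hE₁E₁ : ∀ i, B (E₁ i) (E₁ i) = -2)
    (hE₂E₂ : ∀ i, B (E₂ i) (E₂ i) = -2)
    (hE₁E₂ : ∀ i, B (E₁ i) (E₂ i) = 1)
    (hE₁E₁' : ∀ i j, i ≠ j → B (E₁ i) (E₁ j) = 0)
    (hE₂E₂' : ∀ i j, i ≠ j → B (E₂ i) (E₂ j) = 0)
    (hE₁E₂' : ∀ i j, i ≠ j → B (E₁ i) (E₂ j) = 0)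
    (hFF : B F F = 0)
    (hFE₁ : ∀ i, B F (E₁ i) = 0)
    (hFE₂ : ∀ i, B F (E₂ i) = 0)
    (hFC : B F C = 3)
    (hξF : B ξ F = 3)
    (hCC : B C C = 0)
    (hCE₁ : ∀ i, B C (E₁ i) = 1)
    (hCE₂lo : ∀ i : Fin 10, (i : ℕ) < 6 → B C (E₂ i) = 0)
    (hCE₂hi : ∀ i : Fin 10, 6 ≤ (i : ℕ) → B C (E₂ i) = 1)
    (hξE₁ : ∀ i, B ξ (E₁ i) = 1)
    (hξE₂ : ∀ i, B ξ (E₂ i) = 1)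
    (hξξ : B ξ ξ = -2) :
    ξ = -((1 : ℚ) / 3) •
        (∑ i ∈ Finset.univ.filter (fun i : Fin 10 => (i : ℕ) < 6), (E₁ i + 2 • E₂ i))
        + C + F ∧
    (∑ i ∈ Finset.univ.filter (fun i : Fin 10 => (i : ℕ) < 6), (E₁ i + 2 • E₂ i))
      = 3 • (C + F - ξ) := by
  have hE : IsOrthogonalA₂Family B E₁ E₂ := ⟨hE₁E₁, hE₂E₂, hE₁E₂, hE₁E₁', hE₂E₂', hE₁E₂'⟩
  set S := Finset.univ.filter (fun i : Fin 10 => (i : ℕ) < 6)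
  have hmem : ∀ i, i ∈ S ↔ (i : ℕ) < 6 := by simp [S]
  set s := ∑ i ∈ S, (E₁ i + 2 • E₂ i)
  have hs : s = ∑ i ∈ S, ((1 : ℚ) • E₁ i + (2 : ℚ) • E₂ i) :=
    Finset.sum_congr rfl fun i _ => by module
  obtain ⟨η, hη⟩ : ∃ η, η = -((1 : ℚ) / 3) • s + C + F := ⟨_, rfl⟩
  have hηapply : ∀ w, B η w = -(1 / 3) * B s w + B C w + B F w := by simp [hη]
  have hηE₁ : ∀ k, B η (E₁ k) = 1 := fun k => by
    rw [hηapply, hs, hE.sum_apply_E₁ hsymm, hCE₁, hFE₁]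
    split_ifs <;> norm_num
  have hηE₂ : ∀ k, B η (E₂ k) = 1 := fun k => by
    rw [hηapply, hs, hE.sum_apply_E₂, hFE₂]
    split_ifs with hk
    · rw [hCE₂lo k ((hmem k).1 hk)]; norm_num
    · rw [hCE₂hi k (not_lt.1 (mt (hmem k).2 hk))]; norm_num
  have hηF : B η F = 3 := by simp [hη, hs, hsymm _ F, hFE₁, hFE₂, hFF, hFC]
  have hηη : B η η = -2 := by
    have hS : S.card = 6 := by decide
    have hCs : B C s = 6 := by
      rw [apply_sum_add_two_smul B (fun i _ => hCE₁ i) fun i hi => hCE₂lo i ((hmem i).1 hi), hS]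
      norm_num
    have hηs : B η s = 18 := by
      rw [apply_sum_add_two_smul B (fun i _ => hηE₁ i) fun i _ => hηE₂ i, hS]
      norm_num
    have hCη : B C η = 1 := by
      rw [hη, map_add, map_add, map_smul, hCs, hCC, hsymm C F, hFC, smul_eq_mul]
      norm_num
    rw [hηapply, hsymm s, hηs, hCη, hsymm F, hηF]
    norm_num
  have hξη : ξ = η := hE.eq_of_apply_eq hsymm two_ne_zero three_ne_zero hspan hFE₁ hFE₂ hFF
    (by rw [hFC]; norm_num) (fun k => by rw [hξE₁, hηE₁]) (fun k => by rw [hξE₂, hηE₂])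
    (by rw [hξF, hηF]) (by rw [hηF]; norm_num) (by rw [hξξ, hηη])
  rw [hξη, hη]
  exact ⟨rfl, by module⟩

/-- Theorem 9.11 of the paper: expression of the curve of cusps `ξ` of a quasi-elliptic
K3 surface with 10 fibers of type IV in terms of the fibre components, a trisection `C`
of arithmetic genus 1 and the fiber class `F`; in particular `∑_{i=1}^{6} (E₁ⁱ + 2E₂ⁱ)`
is divisible by 3. -/
theorem stmt3 (V : Type*) [AddCommGroup V] [Module ℚ V]
    (B : V →ₗ[ℚ] V →ₗ[ℚ] ℚ)
    (hsymm : ∀ x y, B x y = B y x)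
    (E₁ E₂ : Fin 10 → V) (C F ξ : V)
    (hindep : LinearIndependent ℚ
      (Sum.elim (Sum.elim E₁ E₂)
        (Sum.elim (fun _ : Unit => C) (fun _ : Unit => F))))
    (hspan : Submodule.span ℚ (Set.range
      (Sum.elim (Sum.elim E₁ E₂)
        (Sum.elim (fun _ : Unit => C) (fun _ : Unit => F)))) = ⊤)
    (hE₁E₁ : ∀ i, B (E₁ i) (E₁ i) = -2)
    (hE₂E₂ : ∀ i, B (E₂ i) (E₂ i) = -2)
    (hE₁E₂ : ∀ i, B (E₁ i) (E₂ i) = 1)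
    (hE₁E₁' : ∀ i j, i ≠ j → B (E₁ i) (E₁ j) = 0)
    (hE₂E₂' : ∀ i j, i ≠ j → B (E₂ i) (E₂ j) = 0)
    (hE₁E₂' : ∀ i j, i ≠ j → B (E₁ i) (E₂ j) = 0)
    (hFF : B F F = 0)
    (hFE₁ : ∀ i, B F (E₁ i) = 0)
    (hFE₂ : ∀ i, B F (E₂ i) = 0)
    (hFC : B F C = 3)
    (hξF : B ξ F = 3)
    (hCC : B C C = 0)
    (hCE₁ : ∀ i, B C (E₁ i) = 1)
    (hCE₂lo : ∀ i : Fin 10, (i : ℕ) < 6 → B C (E₂ i) = 0)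
    (hCE₂hi : ∀ i : Fin 10, 6 ≤ (i : ℕ) → B C (E₂ i) = 1)
    (hξE₁ : ∀ i, B ξ (E₁ i) = 1)
    (hξE₂ : ∀ i, B ξ (E₂ i) = 1)
    (hξξ : B ξ ξ = -2) :
    ξ = -((1 : ℚ) / 3) •
        (∑ i ∈ Finset.univ.filter (fun i : Fin 10 => (i : ℕ) < 6), (E₁ i + 2 • E₂ i))
        + C + F ∧
    (∑ i ∈ Finset.univ.filter (fun i : Fin 10 => (i : ℕ) < 6), (E₁ i + 2 • E₂ i))
      = 3 • (C + F - ξ) :=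
  stmt3_general V B hsymm E₁ E₂ C F ξ hspan hE₁E₁ hE₂E₂ hE₁E₂ hE₁E₁' hE₂E₂' hE₁E₂' hFF hFE₁ hFE₂ hFC
    hξF hCC hCE₁ hCE₂lo hCE₂hi hξE₁ hξE₂ hξξ
end

section
/- Let V be an additive commutative group equipped with a symmetric bilinear form B : V × V → ℤ, let n be a natural number, and let C, C' : Fin n → V be an A₂^n configuration in (V,B). If M ∈ V satisfies 3 • M = Σ_{i} (C i + 2 • C' i), then 3 * B(M, M) = −2 * n. -/
/-- Equation (2) of the paper: if `3 • M = ∑ (Cᵢ + 2C'ᵢ)` for an `A₂^n` configuration,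
then `3 * M·M = -2n`. -/
theorem stmt4 (V : Type*) [AddCommGroup V]
    (B : V →+ V →+ ℤ)
    (hsymm : ∀ x y, B x y = B y x)
    (n : ℕ)
    (C C' : Fin n → V)
    (hCC : ∀ i, B (C i) (C i) = -2)
    (hC'C' : ∀ i, B (C' i) (C' i) = -2)
    (hCC' : ∀ i, B (C i) (C' i) = 1)
    (hCij : ∀ i j, i ≠ j → B (C i) (C j) = 0)
    (hC'ij : ∀ i j, i ≠ j → B (C' i) (C' j) = 0)
    (hCC'ij : ∀ i j, i ≠ j → B (C i) (C' j) = 0)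
    (M : V) (hM : 3 • M = ∑ i, (C i + 2 • C' i)) :
    3 * B M M = -2 * (n : ℤ) := by
  have key : B (3 • M) (3 • M) = -6 * (n : ℤ) := by
    rw [hM]
    have expand : B (∑ i, (C i + 2 • C' i)) (∑ i, (C i + 2 • C' i))
        = ∑ x, ∑ j, B (C x + 2 • C' x) (C j + 2 • C' j) := by
      rw [map_sum]
      exact Finset.sum_congr rfl fun x _ => by rw [hsymm]; exact map_sum _ _ _
    rw [expand]
    have : ∀ x ∈ Finset.univ, (∑ j, B (C x + 2 • C' x) (C j + 2 • C' j)) = -6 := by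
      intro x _
      have h1 : ∀ j ∈ Finset.univ, B (C x + 2 • C' x) (C j + 2 • C' j)
          = if j = x then -6 else 0 := by
        intro j _
        by_cases h : j = x
        · subst h
          rw [if_pos rfl]
          simp only [two_smul, map_add, AddMonoidHom.add_apply]
          rw [hCC, hC'C', hCC', hsymm (C' j) (C j), hCC']
          ring
        · rw [if_neg h]
          simp only [two_smul, map_add, AddMonoidHom.add_apply]
          rw [hCij x j (Ne.symm h), hC'ij x j (Ne.symm h), hCC'ij x j (Ne.symm h),
            hsymm (C' x) (C j), hCC'ij j x h]
          ring
      rw [Finset.sum_congr rfl h1, Finset.sum_ite_eq' Finset.univ x (fun _ => (-6 : ℤ))]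
      simp
    rw [Finset.sum_congr rfl this]
    simp [mul_comm]
  have h9 : B (3 • M) (3 • M) = 9 * B M M := by
    have h3 : (3 : ℕ) • M = M + M + M := by module
    rw [h3]
    simp only [map_add, AddMonoidHom.add_apply]
    ring
  rw [h9] at key
  linarith
end

section
/- Let V be an additive commutative group equipped with a symmetric bilinear form B : V × V → ℤ, let n be a natural number, let C, C' : Fin n → V be an A₂^n configuration in (V,B), and let M ∈ V satisfy 3 • M = Σ_{i} (C i + 2 • C' i). If B(M, M) is even, then 3 divides n. -/
/-- The divisibility step in the proof of Lemma 2.2 of the paper: since the lattice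
is even, `M·M = -2n/3` being an even integer forces `3 ∣ n`. -/
theorem stmt6 (V : Type*) [AddCommGroup V]
    (B : V →+ V →+ ℤ)
    (hsymm : ∀ x y, B x y = B y x)
    (n : ℕ)
    (C C' : Fin n → V)
    (hCC : ∀ i, B (C i) (C i) = -2)
    (hC'C' : ∀ i, B (C' i) (C' i) = -2)
    (hCC' : ∀ i, B (C i) (C' i) = 1)
    (hCij : ∀ i j, i ≠ j → B (C i) (C j) = 0)
    (hC'ij : ∀ i j, i ≠ j → B (C' i) (C' j) = 0)
    (hCC'ij : ∀ i j, i ≠ j → B (C i) (C' j) = 0)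
    (M : V) (hM : 3 • M = ∑ i, (C i + 2 • C' i))
    (heven : Even (B M M)) :
    3 ∣ n := by
  have key : (9 : ℤ) * B M M = -6 * n := by
    have h1 : B (3 • M) (3 • M) = 9 * B M M := by
      simp [map_nsmul]
      ring
    rw [hM] at h1
    simp only [map_sum, AddMonoidHom.finset_sum_apply] at h1
    have h2 : ∀ i : Fin n, (∑ j, B (C j + 2 • C' j) (C i + 2 • C' i)) = -6 := by
      intro i
      rw [Finset.sum_eq_single i]
      · simp only [map_add, map_nsmul, AddMonoidHom.add_apply,
          AddMonoidHom.nsmul_apply, map_add, map_nsmul]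
        rw [hCC i, hCC' i, hsymm (C' i) (C i), hCC' i, hC'C' i]
        ring
      · intro j _ hji
        simp only [map_add, map_nsmul, AddMonoidHom.add_apply,
          AddMonoidHom.nsmul_apply]
        rw [hCij j i hji, hCC'ij j i hji, hsymm (C' j) (C i),
          hCC'ij i j (Ne.symm hji), hC'ij j i hji]
        ring
      · intro h; exact absurd (Finset.mem_univ i) h
    have h3 : ∑ i, (∑ j, B (C j + 2 • C' j) (C i + 2 • C' i)) = -6 * n := by
      rw [Finset.sum_congr rfl fun i _ => h2 i]
      simp [mul_comm]
    rw [h3] at h1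
    omega
  obtain ⟨k, hk⟩ := heven
  have : (n : ℤ) = -3 * k := by omega
  have h3n : (3 : ℤ) ∣ (n : ℤ) := ⟨-k, by omega⟩
  exact_mod_cast h3n
end

section
/- Let V be a torsion-free additive commutative group equipped with a symmetric bilinear form B : V × V → ℤ, let n ≥ 1, let C, C' : Fin n → V be an A₂^n configuration in (V,B), and let M ∈ V satisfy 3 • M = Σ_{i} (C i + 2 • C' i). Let N be the subgroup of V generated by the C i and C' i, and let L be the subgroup generated by N together with M. Then the 2n elements C i, C' i are linearly independent over ℤ, M ∉ N, and N has index exactly 3 in L. -/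
/-!
Pairing against the vectors `2 C j + C' j` and `C j + 2 C' j` is `-3` times the Kronecker delta
on the configuration, which forces linear independence. Pairing against `w = 2 C j₀ + C' j₀`
and reducing mod 3 gives a homomorphism `V → ℤ/3` that kills `N`, while `3 B(M, w) = -3`
makes it send `M` to the unit `-1`. Since `L = N + ℤ M` and `3 M ∈ N`, this homomorphism
identifies `L / N` with `ℤ/3`.
-/

open Finset

theorem linearIndependent_int_of_pairing {ι V : Type*} [AddCommGroup V] [DecidableEq ι]
    {v : ι → V} (f : ι → V →+ ℤ) {c : ℤ} (hc : c ≠ 0)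
    (hpair : ∀ i j, f j (v i) = if i = j then c else 0) : LinearIndependent ℤ v := by
  rw [linearIndependent_iff']
  intro s g hg j hj
  have hfj : ∑ i ∈ s, g i * f j (v i) = 0 := by
    simpa only [map_sum, map_zsmul, smul_eq_mul, map_zero] using congrArg (f j) hg
  simp only [hpair, mul_ite, mul_zero, sum_ite_eq', hj, if_true] at hfj
  exact (mul_eq_zero.mp hfj).resolve_right hc

namespace AddSubgroup

theorem relIndex_sup_zmultiples_of_isUnit {V : Type*} [AddCommGroup V] {N : AddSubgroup V}
    {M : V} {k : ℕ} (φ : V →+ ZMod k) (hN : N ≤ φ.ker) (hM : IsUnit (φ M))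
    (hkM : k • M ∈ N) : N.relIndex (N ⊔ zmultiples M) = k := by
  set L := N ⊔ zmultiples M
  set ψ : L →+ ZMod k := φ.comp L.subtype
  have hker : ψ.ker = N.addSubgroupOf L := by
    ext ⟨x, hx⟩
    simp only [AddMonoidHom.mem_ker, mem_addSubgroupOf]
    refine ⟨fun hψx ↦ ?_, fun hxN ↦ hN hxN⟩
    obtain ⟨y, hy, _, ⟨a, rfl⟩, rfl⟩ := mem_sup.mp hx
    have ha : ((a : ℤ) : ZMod k) = 0 := by
      simpa [ψ, AddMonoidHom.mem_ker.mp (hN hy), zsmul_eq_mul, hM.mul_left_eq_zero] using hψx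
    obtain ⟨m, rfl⟩ := (ZMod.intCast_zmod_eq_zero_iff_dvd a k).mp ha
    have haM : ((k : ℤ) * m) • M ∈ N := by
      rw [mul_comm, mul_zsmul, natCast_zsmul]
      exact zsmul_mem hkM m
    exact add_mem hy haM
  have hsurj : Function.Surjective ψ := by
    intro c
    obtain ⟨u, hu⟩ := hM
    refine ⟨((c * ↑u⁻¹ : ZMod k).cast : ℤ) • ⟨M, mem_sup_right (mem_zmultiples M)⟩, ?_⟩
    simp [ψ, ← hu, zsmul_eq_mul, mul_assoc]
  rw [relIndex, ← hker, index_ker, AddMonoidHom.range_eq_top.mpr hsurj, card_top,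
    Nat.card_zmod]

end AddSubgroup

structure IsA₂Config {ι V : Type*} [AddCommGroup V] (B : V →+ V →+ ℤ) (C C' : ι → V) :
    Prop where
  left_left : ∀ i, B (C i) (C i) = -2
  right_right : ∀ i, B (C' i) (C' i) = -2
  left_right : ∀ i, B (C i) (C' i) = 1
  left_left_of_ne : ∀ i j, i ≠ j → B (C i) (C j) = 0
  right_right_of_ne : ∀ i j, i ≠ j → B (C' i) (C' j) = 0
  left_right_of_ne : ∀ i j, i ≠ j → B (C i) (C' j) = 0

namespace IsA₂Config

variable {ι V : Type*} [AddCommGroup V] {B : V →+ V →+ ℤ} {C C' : ι → V}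

theorem apply_left_two_smul_add [DecidableEq ι] (h : IsA₂Config B C C') (i j : ι) :
    B (C i) (2 • C j + C' j) = if i = j then -3 else 0 := by
  rcases eq_or_ne i j with rfl | hij
  · simp [h.left_left, h.left_right]
  · simp [hij, h.left_left_of_ne i j hij, h.left_right_of_ne i j hij]

theorem apply_right_two_smul_add (h : IsA₂Config B C C') (hsymm : ∀ x y, B x y = B y x)
    (i j : ι) : B (C' i) (2 • C j + C' j) = 0 := by
  rw [map_add, map_nsmul, hsymm (C' i) (C j)]
  rcases eq_or_ne i j with rfl | hij
  · simp [h.left_right, h.right_right]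
  · simp [h.left_right_of_ne j i hij.symm, h.right_right_of_ne i j hij]

theorem apply_left_add_two_smul (h : IsA₂Config B C C') (i j : ι) :
    B (C i) (C j + 2 • C' j) = 0 := by
  rcases eq_or_ne i j with rfl | hij
  · simp [h.left_left, h.left_right]
  · simp [h.left_left_of_ne i j hij, h.left_right_of_ne i j hij]

theorem apply_right_add_two_smul [DecidableEq ι] (h : IsA₂Config B C C')
    (hsymm : ∀ x y, B x y = B y x) (i j : ι) :
    B (C' i) (C j + 2 • C' j) = if i = j then -3 else 0 := by
  rw [map_add, map_nsmul, hsymm (C' i) (C j)]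
  rcases eq_or_ne i j with rfl | hij
  · simp [h.left_right, h.right_right]
  · simp [hij, h.left_right_of_ne j i hij.symm, h.right_right_of_ne i j hij]

theorem linearIndependent [DecidableEq ι] (h : IsA₂Config B C C')
    (hsymm : ∀ x y, B x y = B y x) :
    LinearIndependent ℤ (Sum.elim C C') := by
  refine linearIndependent_int_of_pairing
    (Sum.elim (fun j ↦ B.flip (2 • C j + C' j)) (fun j ↦ B.flip (C j + 2 • C' j)))
    (by norm_num : (-3 : ℤ) ≠ 0) ?_
  rintro (i | i) (j | j) <;>
    simp only [Sum.elim_inl, Sum.elim_inr, AddMonoidHom.flip_apply, Sum.inl.injEq,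
      Sum.inr.injEq, reduceCtorEq, if_false, h.apply_left_two_smul_add,
      h.apply_right_two_smul_add hsymm, h.apply_left_add_two_smul,
      h.apply_right_add_two_smul hsymm]

theorem closure_le_ker [DecidableEq ι] (h : IsA₂Config B C C')
    (hsymm : ∀ x y, B x y = B y x) (j : ι) :
    AddSubgroup.closure (Set.range C ∪ Set.range C') ≤
      ((Int.castAddHom (ZMod 3)).comp (B.flip (2 • C j + C' j))).ker := by
  rw [AddSubgroup.closure_le]
  rintro _ (⟨i, rfl⟩ | ⟨i, rfl⟩) <;>
    simp only [SetLike.mem_coe, AddMonoidHom.mem_ker, AddMonoidHom.comp_apply,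
      AddMonoidHom.flip_apply, h.apply_left_two_smul_add, h.apply_right_two_smul_add hsymm]
  · split_ifs <;> decide
  · exact map_zero _

theorem apply_sum_two_smul_add [Fintype ι] [DecidableEq ι] (h : IsA₂Config B C C')
    (hsymm : ∀ x y, B x y = B y x) (j : ι) :
    B (∑ i, (C i + 2 • C' i)) (2 • C j + C' j) = -3 := by
  have hterm : ∀ i, B (C i + 2 • C' i) (2 • C j + C' j) = if i = j then -3 else 0 := fun i ↦ by
    rw [map_add B, map_nsmul B, AddMonoidHom.add_apply, AddMonoidHom.nsmul_apply,
      h.apply_left_two_smul_add, h.apply_right_two_smul_add hsymm, smul_zero, add_zero]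
  rw [map_sum, AddMonoidHom.finsetSum_apply]
  simp only [hterm, sum_ite_eq', mem_univ, if_true]

end IsA₂Config

theorem stmt9_general (V : Type*) [AddCommGroup V]
    (B : V →+ V →+ ℤ)
    (hsymm : ∀ x y, B x y = B y x)
    (n : ℕ) (hn : 1 ≤ n)
    (C C' : Fin n → V)
    (hCC : ∀ i, B (C i) (C i) = -2)
    (hC'C' : ∀ i, B (C' i) (C' i) = -2)
    (hCC' : ∀ i, B (C i) (C' i) = 1)
    (hCij : ∀ i j, i ≠ j → B (C i) (C j) = 0)
    (hC'ij : ∀ i j, i ≠ j → B (C' i) (C' j) = 0)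
    (hCC'ij : ∀ i j, i ≠ j → B (C i) (C' j) = 0)
    (M : V) (hM : 3 • M = ∑ i, (C i + 2 • C' i))
    (N L : AddSubgroup V)
    (hN : N = AddSubgroup.closure (Set.range C ∪ Set.range C'))
    (hL : L = AddSubgroup.closure (insert M (Set.range C ∪ Set.range C'))) :
    LinearIndependent ℤ (Sum.elim C C') ∧ M ∉ N ∧ N.relIndex L = 3 := by
  have h : IsA₂Config B C C' := ⟨hCC, hC'C', hCC', hCij, hC'ij, hCC'ij⟩
  let j₀ : Fin n := ⟨0, hn⟩
  have hL' : L = N ⊔ AddSubgroup.zmultiples M := by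
    rw [hL, hN, Set.insert_eq, AddSubgroup.closure_union, ← AddSubgroup.zmultiples_eq_closure,
      sup_comm]
  have hMw : B M (2 • C j₀ + C' j₀) = -1 := by
    have h3 := congrArg (B.flip (2 • C j₀ + C' j₀)) hM
    rw [map_nsmul, AddMonoidHom.flip_apply, AddMonoidHom.flip_apply,
      h.apply_sum_two_smul_add hsymm, nsmul_eq_mul, Nat.cast_ofNat] at h3
    linarith
  have h3M : 3 • M ∈ N := by
    rw [hM, hN]
    exact sum_mem fun i _ ↦ add_mem (AddSubgroup.subset_closure (.inl ⟨i, rfl⟩))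
      (nsmul_mem (AddSubgroup.subset_closure (.inr ⟨i, rfl⟩)) 2)
  have hindex : N.relIndex L = 3 := by
    rw [hL']
    refine AddSubgroup.relIndex_sup_zmultiples_of_isUnit _
      (hN ▸ h.closure_le_ker hsymm j₀) ?_ h3M
    rw [AddMonoidHom.comp_apply, AddMonoidHom.flip_apply, hMw]
    exact isUnit_one.neg.map (Int.castRingHom (ZMod 3))
  refine ⟨h.linearIndependent hsymm, fun hMN ↦ ?_, hindex⟩
  rw [hL', sup_eq_left.mpr ((AddSubgroup.zmultiples_le).mpr hMN),
    AddSubgroup.relIndex_self] at hindex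
  exact absurd hindex (by norm_num)

/-- A 3-divisible `A₂^n` configuration in a torsion-free group generates
a sublattice `L` containing the configuration lattice `N ≅ A₂^n` with index 3. -/
theorem stmt9 (V : Type*) [AddCommGroup V] [NoZeroSMulDivisors ℤ V]
    (B : V →+ V →+ ℤ)
    (hsymm : ∀ x y, B x y = B y x)
    (n : ℕ) (hn : 1 ≤ n)
    (C C' : Fin n → V)
    (hCC : ∀ i, B (C i) (C i) = -2)
    (hC'C' : ∀ i, B (C' i) (C' i) = -2)
    (hCC' : ∀ i, B (C i) (C' i) = 1)
    (hCij : ∀ i j, i ≠ j → B (C i) (C j) = 0)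
    (hC'ij : ∀ i j, i ≠ j → B (C' i) (C' j) = 0)
    (hCC'ij : ∀ i j, i ≠ j → B (C i) (C' j) = 0)
    (M : V) (hM : 3 • M = ∑ i, (C i + 2 • C' i))
    (N L : AddSubgroup V)
    (hN : N = AddSubgroup.closure (Set.range C ∪ Set.range C'))
    (hL : L = AddSubgroup.closure (insert M (Set.range C ∪ Set.range C'))) :
    LinearIndependent ℤ (Sum.elim C C') ∧ M ∉ N ∧ N.relIndex L = 3 :=
  stmt9_general V B hsymm n hn C C' hCC hC'C' hCC' hCij hC'ij hCC'ij M hM N L hN hL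
end

section
/- Let V be a real vector space equipped with a symmetric bilinear form B, let C, C' : Fin 6 → V be an A₂^6 configuration in (V,B), and let h ∈ V satisfy B(h,h) > 0. Then the 13 vectors C 1, …, C 6, C' 1, …, C' 6, h are linearly independent over ℝ; in particular dim_ℝ V ≥ 13. -/
private lemma pairing_sum {V : Type*} [AddCommGroup V] [Module ℝ V]
    (B : V →ₗ[ℝ] V →ₗ[ℝ] ℝ) (u w : Fin 6 → V) (f g : Fin 6 → ℝ) (d : Fin 6 → ℝ)
    (hd : ∀ i j, B (u i) (w j) = if i = j then d i else 0) :
    B (∑ i, f i • u i) (∑ j, g j • w j) = ∑ i, f i * g i * d i := by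
  simp only [map_sum, map_smul, LinearMap.coe_sum, Finset.sum_apply,
    LinearMap.smul_apply, smul_eq_mul, hd, mul_ite, mul_zero,
    Finset.sum_ite_eq, Finset.sum_ite_eq', Finset.mem_univ, if_true]
  exact Finset.sum_congr rfl fun i _ => by ring

/-- First step in the proof of Theorem 1.1(i) of the paper: an `A₂^6` configuration
together with a class `h` of positive square gives 13 linearly independent vectors,
so `dim V ≥ 13`. -/
theorem stmt10 (V : Type*) [AddCommGroup V] [Module ℝ V]
    (B : V →ₗ[ℝ] V →ₗ[ℝ] ℝ)
    (hsymm : ∀ x y, B x y = B y x)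
    (C C' : Fin 6 → V)
    (hCC : ∀ i, B (C i) (C i) = -2)
    (hC'C' : ∀ i, B (C' i) (C' i) = -2)
    (hCC' : ∀ i, B (C i) (C' i) = 1)
    (hCij : ∀ i j, i ≠ j → B (C i) (C j) = 0)
    (hC'ij : ∀ i j, i ≠ j → B (C' i) (C' j) = 0)
    (hCC'ij : ∀ i j, i ≠ j → B (C i) (C' j) = 0)
    (h : V) (hh : 0 < B h h) :
    LinearIndependent ℝ (Sum.elim (Sum.elim C C') (fun _ : Unit => h)) ∧
      13 ≤ Module.rank ℝ V := by
  have key : LinearIndependent ℝ (Sum.elim (Sum.elim C C') (fun _ : Unit => h)) := by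
    rw [Fintype.linearIndependent_iff]
    intro g hg
    set a : Fin 6 → ℝ := fun i => g (Sum.inl (Sum.inl i)) with ha
    set b : Fin 6 → ℝ := fun i => g (Sum.inl (Sum.inr i)) with hb
    set c : ℝ := g (Sum.inr ()) with hc
    have hsum : (∑ i, a i • C i + ∑ i, b i • C' i) + c • h = 0 := by
      rw [← hg]
      rw [Fintype.sum_sum_type, Fintype.sum_sum_type]
      simp [ha, hb, hc]
    set v0 : V := ∑ i, a i • C i + ∑ i, b i • C' i with hv0
    have hv0h : v0 = -(c • h) := by
      rw [eq_neg_iff_add_eq_zero]; exact hsum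
    -- Gram computations
    have e1 : B (∑ i, a i • C i) (∑ j, a j • C j) = ∑ i, a i * a i * (-2) :=
      pairing_sum B C C a a (fun _ => -2) (fun i j => by
        by_cases hij : i = j
        · subst hij; simp [hCC]
        · rw [if_neg hij]; exact hCij i j hij)
    have e2 : B (∑ i, a i • C i) (∑ j, b j • C' j) = ∑ i, a i * b i * 1 :=
      pairing_sum B C C' a b (fun _ => 1) (fun i j => by
        by_cases hij : i = j
        · subst hij; simp [hCC']
        · rw [if_neg hij]; exact hCC'ij i j hij)
    have e3 : B (∑ i, b i • C' i) (∑ j, a j • C j) = ∑ i, b i * a i * 1 :=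
      pairing_sum B C' C b a (fun _ => 1) (fun i j => by
        by_cases hij : i = j
        · subst hij; simp [hsymm, hCC']
        · rw [if_neg hij, hsymm]; exact hCC'ij j i (Ne.symm hij))
    have e4 : B (∑ i, b i • C' i) (∑ j, b j • C' j) = ∑ i, b i * b i * (-2) :=
      pairing_sum B C' C' b b (fun _ => -2) (fun i j => by
        by_cases hij : i = j
        · subst hij; simp [hC'C']
        · rw [if_neg hij]; exact hC'ij i j hij)
    have eGram : B v0 v0 = ∑ i, (-2 * a i * a i + 2 * a i * b i - 2 * b i * b i) := by
      rw [hv0]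
      simp only [map_add, LinearMap.add_apply]
      rw [e1, e2, e3, e4, ← Finset.sum_add_distrib, ← Finset.sum_add_distrib,
        ← Finset.sum_add_distrib]
      exact Finset.sum_congr rfl fun i _ => by ring
    have ePos : B v0 v0 = c * c * B h h := by
      rw [hv0h]; simp [mul_assoc]
    have hterm_nonpos : ∀ i ∈ Finset.univ,
        (-2 * a i * a i + 2 * a i * b i - 2 * b i * b i) ≤ 0 := by
      intro i _; nlinarith [sq_nonneg (a i - b i), sq_nonneg (a i), sq_nonneg (b i)]
    have hsum_nonpos : ∑ i, (-2 * a i * a i + 2 * a i * b i - 2 * b i * b i) ≤ 0 :=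
      Finset.sum_nonpos hterm_nonpos
    have hc0 : c = 0 := by
      by_contra hcne
      have : 0 < c * c * B h h := mul_pos (mul_self_pos.mpr hcne) hh
      rw [← ePos, eGram] at this
      linarith
    have hzero : ∑ i, (-2 * a i * a i + 2 * a i * b i - 2 * b i * b i) = 0 := by
      rw [← eGram, ePos, hc0]; ring
    have hab : ∀ i, a i = 0 ∧ b i = 0 := by
      intro i
      have := (Finset.sum_eq_zero_iff_of_nonpos hterm_nonpos).mp hzero i (Finset.mem_univ i)
      constructor <;> nlinarith [sq_nonneg (a i - b i), sq_nonneg (a i), sq_nonneg (b i)]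
    intro k
    match k with
    | Sum.inl (Sum.inl i) => exact (hab i).1
    | Sum.inl (Sum.inr i) => exact (hab i).2
    | Sum.inr () => exact hc0
  refine ⟨key, ?_⟩
  simpa using key.cardinal_lift_le_rank
end
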